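/- arXiv:1306.0105 — 7 statements merged into one kernel-verified Lean document; each statement's English description precedes it below -/
import Mathlib

section
/- If (a, b) is an equilibrium point of the system a' = b/2 − (3C/8)(a² + b²)b − J/2 + (B/2)sin γ, b' = −a/2 + (3C/8)(a² + b²)a − A/2 − (B/2)cos γ, and J − B sin γ ≠ 0, then b satisfies the cubic equation b − (3C/4) · (((A + B cos γ)² + (J − B sin γ)²)/(J − B sin γ)²) · b³ − J + B sin γ = 0. -/
/-! At an equilibrium both coordinates are multiples of the same factor `u = (3C/4)(a² + b²) − 1`:
`u a = A + B cos γ` and `u b = −(J − B sin γ)`. Hence `(a, b)` is proportional to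
`(A + B cos γ, −(J − B sin γ))`, which expresses `a² + b²` through `b²` and turns the
`b`-equation into a cubic in `b` alone. -/

theorem sq_add_sq_eq_of_mul_eq_neg {K : Type*} [Field K] {a b P Q : K} (hQ : Q ≠ 0)
    (h : a * Q = -(b * P)) : a ^ 2 + b ^ 2 = (P ^ 2 + Q ^ 2) / Q ^ 2 * b ^ 2 := by
  have ha : a = -(b * P) / Q := eq_div_of_mul_eq hQ h
  rw [ha]
  field_simp

theorem cubic_of_mul_sq_add_sq_sub_one {K : Type*} [Field K] {k a b P Q : K} (hQ : Q ≠ 0)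
    (ha : (k * (a ^ 2 + b ^ 2) - 1) * a = P) (hb : (k * (a ^ 2 + b ^ 2) - 1) * b = -Q) :
    b - k * ((P ^ 2 + Q ^ 2) / Q ^ 2) * b ^ 3 - Q = 0 := by
  have hprop : a * Q = -(b * P) := by linear_combination a * hb - b * ha
  have hr := sq_add_sq_eq_of_mul_eq_neg hQ hprop
  linear_combination -hb + k * b * hr

/-- If `(a, b)` is an equilibrium point of the slow-flow system and `J − B sin γ ≠ 0`,
then `b` satisfies the cubic equation
`b − (3C/4)·(((A + B cos γ)² + (J − B sin γ)²)/(J − B sin γ)²)·b³ − J + B sin γ = 0`. -/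
theorem equilibrium_cubic (A B C J γ a b : ℝ)
    (ha : b / 2 - 3 * C / 8 * (a ^ 2 + b ^ 2) * b - J / 2 + B / 2 * Real.sin γ = 0)
    (hb : -a / 2 + 3 * C / 8 * (a ^ 2 + b ^ 2) * a - A / 2 - B / 2 * Real.cos γ = 0)
    (hne : J - B * Real.sin γ ≠ 0) :
    b - 3 * C / 4 *
        (((A + B * Real.cos γ) ^ 2 + (J - B * Real.sin γ) ^ 2) /
          (J - B * Real.sin γ) ^ 2) * b ^ 3 - J + B * Real.sin γ = 0 := by
  have hu_a : (3 * C / 4 * (a ^ 2 + b ^ 2) - 1) * a = A + B * Real.cos γ := by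
    linear_combination 2 * hb
  have hu_b : (3 * C / 4 * (a ^ 2 + b ^ 2) - 1) * b = -(J - B * Real.sin γ) := by
    linear_combination -2 * ha
  linear_combination cubic_of_mul_sq_add_sq_sub_one hne hu_a hu_b
end

section
/- Assume C > 0, J − B sin γ ≠ 0, and 0 < D < 16/(81C), where D = (A + B cos γ)² + (J − B sin γ)². Then the cubic equation b − (3C/4) · (D/(J − B sin γ)²) · b³ − J + B sin γ = 0 has three distinct real roots. -/
/-! The cubic `b - k b³ - s` with `k > 0` is, up to the factor `-k`, the depressed cubic
`x³ + p x + q` with `p = -1/k`, `q = s/k`, and the hypothesis `81 C D < 16` is exactly the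
negativity of its discriminant, `27 k s² < 4`. A depressed cubic with negative discriminant
takes opposite signs at its two critical points `±√(-p/3)`, and the signs beyond them are those
of `x³`, so the intermediate value theorem gives one root in each of three disjoint intervals. -/

theorem exists_three_zeros_of_sign_changes {f : ℝ → ℝ} (hf : Continuous f) {a b c d : ℝ}
    (hab : a ≤ b) (hbc : b ≤ c) (hcd : c ≤ d)
    (ha : f a < 0) (hb : 0 < f b) (hc : f c < 0) (hd : 0 < f d) :
    ∃ x y z, x < y ∧ y < z ∧ f x = 0 ∧ f y = 0 ∧ f z = 0 := by
  obtain ⟨x, ⟨-, hxb⟩, hx⟩ := intermediate_value_Ioo hab hf.continuousOn ⟨ha, hb⟩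
  obtain ⟨y, ⟨hby, hyc⟩, hy⟩ := intermediate_value_Ioo' hbc hf.continuousOn ⟨hc, hb⟩
  obtain ⟨z, ⟨hcz, -⟩, hz⟩ := intermediate_value_Ioo hcd hf.continuousOn ⟨hc, hd⟩
  exact ⟨x, y, z, hxb.trans hby, hyc.trans hcz, hx, hy, hz⟩

theorem exists_three_roots_of_discrim_neg {p q : ℝ} (h : 4 * p ^ 3 + 27 * q ^ 2 < 0) :
    ∃ x y z : ℝ, x < y ∧ y < z ∧
      x ^ 3 + p * x + q = 0 ∧ y ^ 3 + p * y + q = 0 ∧ z ^ 3 + p * z + q = 0 := by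
  have hp : p < 0 := by nlinarith [sq_nonneg q, sq_nonneg p]
  set m := √(-p / 3)
  have hm : 0 < m := Real.sqrt_pos.2 (by linarith)
  have hm2 : m ^ 2 = -p / 3 := Real.sq_sqrt (by linarith)
  have hq : |q| < -2 * p * m / 3 :=
    abs_lt_of_sq_lt_sq (by nlinarith) (by nlinarith)
  set T := 1 + |p| + |q|
  have hT : |q| < T * (T ^ 2 + p) := by
    have : T ≤ T ^ 2 := by nlinarith [abs_nonneg p, abs_nonneg q]
    nlinarith [neg_abs_le p, abs_nonneg p, abs_nonneg q]
  have hmT : m < T := by nlinarith [neg_abs_le p, abs_nonneg q]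
  exact exists_three_zeros_of_sign_changes (f := fun x => x ^ 3 + p * x + q) (by fun_prop)
    (neg_le_neg hmT.le) (by linarith) hmT.le
    (by nlinarith [le_abs_self q]) (by nlinarith [neg_abs_le q])
    (by nlinarith [le_abs_self q]) (by nlinarith [neg_abs_le q])

theorem exists_three_roots_sub_mul_cube {k s : ℝ} (hk : 0 < k) (h : 27 * k * s ^ 2 < 4) :
    ∃ x y z : ℝ, x < y ∧ y < z ∧
      x - k * x ^ 3 - s = 0 ∧ y - k * y ^ 3 - s = 0 ∧ z - k * z ^ 3 - s = 0 := by
  have hdiscrim : 4 * (-1 / k) ^ 3 + 27 * (s / k) ^ 2 < 0 := by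
    have : 4 * (-1 / k) ^ 3 + 27 * (s / k) ^ 2 = (27 * k * s ^ 2 - 4) / k ^ 3 := by
      field_simp; ring
    rw [this]
    exact div_neg_of_neg_of_pos (by linarith) (by positivity)
  have hfactor (x : ℝ) : x - k * x ^ 3 - s = -k * (x ^ 3 + -1 / k * x + s / k) := by
    field_simp; ring
  obtain ⟨x, y, z, hxy, hyz, hx, hy, hz⟩ := exists_three_roots_of_discrim_neg hdiscrim
  exact ⟨x, y, z, hxy, hyz, by simp [hfactor, hx], by simp [hfactor, hy], by simp [hfactor, hz]⟩

theorem cubic_three_distinct_roots_general (A B C J γ : ℝ) (hC : 0 < C)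
    (hne : J - B * Real.sin γ ≠ 0)
    (hD : (A + B * Real.cos γ) ^ 2 + (J - B * Real.sin γ) ^ 2 < 16 / (81 * C)) :
    ∃ b₁ b₂ b₃ : ℝ, b₁ ≠ b₂ ∧ b₁ ≠ b₃ ∧ b₂ ≠ b₃ ∧
      (b₁ - 3 * C / 4 *
          (((A + B * Real.cos γ) ^ 2 + (J - B * Real.sin γ) ^ 2) /
            (J - B * Real.sin γ) ^ 2) * b₁ ^ 3 - J + B * Real.sin γ = 0) ∧
      (b₂ - 3 * C / 4 *
          (((A + B * Real.cos γ) ^ 2 + (J - B * Real.sin γ) ^ 2) /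
            (J - B * Real.sin γ) ^ 2) * b₂ ^ 3 - J + B * Real.sin γ = 0) ∧
      (b₃ - 3 * C / 4 *
          (((A + B * Real.cos γ) ^ 2 + (J - B * Real.sin γ) ^ 2) /
            (J - B * Real.sin γ) ^ 2) * b₃ ^ 3 - J + B * Real.sin γ = 0) := by
  set s := J - B * Real.sin γ
  set D := (A + B * Real.cos γ) ^ 2 + s ^ 2
  have hk : 0 < 3 * C / 4 * (D / s ^ 2) := by positivity
  have hdiscrim : 27 * (3 * C / 4 * (D / s ^ 2)) * s ^ 2 < 4 := by
    rw [lt_div_iff₀ (by positivity)] at hD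
    field_simp
    linarith
  obtain ⟨x, y, z, hxy, hyz, hx, hy, hz⟩ := exists_three_roots_sub_mul_cube hk hdiscrim
  refine ⟨x, y, z, hxy.ne, (hxy.trans hyz).ne, hyz.ne, ?_, ?_, ?_⟩ <;> linarith

/-- Assume `C > 0`, `J − B sin γ ≠ 0`, and `0 < D < 16/(81C)`, where
`D = (A + B cos γ)² + (J − B sin γ)²`. Then the cubic equation
`b − (3C/4)·(D/(J − B sin γ)²)·b³ − J + B sin γ = 0` has three distinct real roots. -/
theorem cubic_three_distinct_roots (A B C J γ : ℝ) (hC : 0 < C)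
    (hne : J - B * Real.sin γ ≠ 0)
    (hD0 : 0 < (A + B * Real.cos γ) ^ 2 + (J - B * Real.sin γ) ^ 2)
    (hD : (A + B * Real.cos γ) ^ 2 + (J - B * Real.sin γ) ^ 2 < 16 / (81 * C)) :
    ∃ b₁ b₂ b₃ : ℝ, b₁ ≠ b₂ ∧ b₁ ≠ b₃ ∧ b₂ ≠ b₃ ∧
      (b₁ - 3 * C / 4 *
          (((A + B * Real.cos γ) ^ 2 + (J - B * Real.sin γ) ^ 2) /
            (J - B * Real.sin γ) ^ 2) * b₁ ^ 3 - J + B * Real.sin γ = 0) ∧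
      (b₂ - 3 * C / 4 *
          (((A + B * Real.cos γ) ^ 2 + (J - B * Real.sin γ) ^ 2) /
            (J - B * Real.sin γ) ^ 2) * b₂ ^ 3 - J + B * Real.sin γ = 0) ∧
      (b₃ - 3 * C / 4 *
          (((A + B * Real.cos γ) ^ 2 + (J - B * Real.sin γ) ^ 2) /
            (J - B * Real.sin γ) ^ 2) * b₃ ^ 3 - J + B * Real.sin γ = 0) :=
  cubic_three_distinct_roots_general A B C J γ hC hne hD
end

section
/- Assume C > 0, J − B sin γ ≠ 0, and 0 < D < 16/(81C), where D = (A + B cos γ)² + (J − B sin γ)². Let ϖ = arccos(−9√(CD)/4) and for k ∈ {0,1,2} set a_k = −(4(A + B cos γ)/(3√(CD))) cos(ϖ/3 + 2kπ/3) and b_k = (4(J − B sin γ)/(3√(CD))) cos(ϖ/3 + 2kπ/3). Then each (a_k, b_k) is an equilibrium point of the system a' = b/2 − (3C/8)(a² + b²)b − J/2 + (B/2)sin γ, b' = −a/2 + (3C/8)(a² + b²)a − A/2 − (B/2)cos γ, i.e. both right-hand sides vanish at (a_k, b_k). -/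
/-!
Writing `(a, b) = t • (-(A + B cos γ), J - B sin γ)` turns both equilibrium equations into the
single depressed cubic `(3CD/4) t³ - t + 1 = 0`. Substituting `t = 4c/(3√(CD))` makes it
`4c³ - 3c = -9√(CD)/4`, which is the triple-angle identity for `c = cos(ϖ/3 + 2kπ/3)`;
the bound `D < 16/(81C)` is exactly what puts `-9√(CD)/4` in the domain of `arccos`.
-/

open Real

lemma four_mul_cos_pow_three_sub_arccos {x : ℝ} (hx₁ : -1 ≤ x) (hx₂ : x ≤ 1) (k : ℤ) :
    4 * cos (arccos x / 3 + 2 * k * π / 3) ^ 3 - 3 * cos (arccos x / 3 + 2 * k * π / 3) = x := by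
  have h3θ : 3 * (arccos x / 3 + 2 * k * π / 3) = arccos x + k * (2 * π) := by ring
  rw [← cos_three_mul, h3θ, cos_add_int_mul_two_pi, cos_arccos hx₁ hx₂]

lemma cubic_root_of_four_mul_pow_three_sub {s c : ℝ} (hs : s ≠ 0)
    (hc : 4 * c ^ 3 - 3 * c = -9 * s / 4) :
    3 * s ^ 2 / 4 * (4 * c / (3 * s)) ^ 3 - 4 * c / (3 * s) + 1 = 0 := by
  field_simp
  linear_combination 4 * hc

lemma slowFlow_eq_zero_of_cubic {a b : ℝ} (C P Q t : ℝ)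
    (ht : 3 * C * (P ^ 2 + Q ^ 2) / 4 * t ^ 3 - t + 1 = 0) (ha : a = -P * t) (hb : b = Q * t) :
    b / 2 - 3 * C / 8 * (a ^ 2 + b ^ 2) * b - Q / 2 = 0 ∧
      -a / 2 + 3 * C / 8 * (a ^ 2 + b ^ 2) * a - P / 2 = 0 := by
  subst ha hb
  constructor
  · linear_combination (-Q / 2) * ht
  · linear_combination (-P / 2) * ht

theorem equilibrium_points_formula_general (A B C J γ : ℝ) (hC : 0 < C)
    (hD0 : 0 < (A + B * Real.cos γ) ^ 2 + (J - B * Real.sin γ) ^ 2)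
    (hD : (A + B * Real.cos γ) ^ 2 + (J - B * Real.sin γ) ^ 2 < 16 / (81 * C)) :
    ∀ k : Fin 3,
      let D : ℝ := (A + B * Real.cos γ) ^ 2 + (J - B * Real.sin γ) ^ 2
      let ϖ : ℝ := Real.arccos (-9 * Real.sqrt (C * D) / 4)
      let a : ℝ := -(4 * (A + B * Real.cos γ) / (3 * Real.sqrt (C * D))) *
        Real.cos (ϖ / 3 + 2 * (k : ℝ) * Real.pi / 3)
      let b : ℝ := 4 * (J - B * Real.sin γ) / (3 * Real.sqrt (C * D)) *
        Real.cos (ϖ / 3 + 2 * (k : ℝ) * Real.pi / 3)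
      (b / 2 - 3 * C / 8 * (a ^ 2 + b ^ 2) * b - J / 2 + B / 2 * Real.sin γ = 0) ∧
      (-a / 2 + 3 * C / 8 * (a ^ 2 + b ^ 2) * a - A / 2 - B / 2 * Real.cos γ = 0) := by
  intro k D ϖ a b
  set s := √(C * D)
  have hCD : 0 < C * D := mul_pos hC hD0
  have hs : 0 < s := sqrt_pos.mpr hCD
  have hs2 : s ^ 2 = C * D := sq_sqrt hCD.le
  have hCD_lt : C * D < 16 / 81 := by
    calc C * D < C * (16 / (81 * C)) := mul_lt_mul_of_pos_left hD hC
      _ = 16 / 81 := by field_simp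
  have hs_le : s ≤ 4 / 9 := by nlinarith
  have hc := four_mul_cos_pow_three_sub_arccos (x := -9 * s / 4) (by linarith) (by linarith) k
  push_cast at hc
  have ht : 3 * C * D / 4 * (4 * cos (ϖ / 3 + 2 * (k : ℝ) * π / 3) / (3 * s)) ^ 3
      - 4 * cos (ϖ / 3 + 2 * (k : ℝ) * π / 3) / (3 * s) + 1 = 0 := by
    rw [mul_assoc, ← hs2]
    exact cubic_root_of_four_mul_pow_three_sub hs.ne' hc
  obtain ⟨h₁, h₂⟩ := slowFlow_eq_zero_of_cubic (a := a) (b := b) C _ _ _ ht (by ring) (by ring)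
  constructor
  · linear_combination h₁
  · linear_combination h₂

/-- Assume `C > 0`, `J − B sin γ ≠ 0`, and `0 < D < 16/(81C)`, where
`D = (A + B cos γ)² + (J − B sin γ)²`. Let `ϖ = arccos(−9√(CD)/4)` and for
`k ∈ {0,1,2}` set `a_k = −(4(A + B cos γ)/(3√(CD))) cos(ϖ/3 + 2kπ/3)`,
`b_k = (4(J − B sin γ)/(3√(CD))) cos(ϖ/3 + 2kπ/3)`. Then each `(a_k, b_k)` is an
equilibrium point of the slow-flow system. -/
theorem equilibrium_points_formula (A B C J γ : ℝ) (hC : 0 < C)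
    (hne : J - B * Real.sin γ ≠ 0)
    (hD0 : 0 < (A + B * Real.cos γ) ^ 2 + (J - B * Real.sin γ) ^ 2)
    (hD : (A + B * Real.cos γ) ^ 2 + (J - B * Real.sin γ) ^ 2 < 16 / (81 * C)) :
    ∀ k : Fin 3,
      let D : ℝ := (A + B * Real.cos γ) ^ 2 + (J - B * Real.sin γ) ^ 2
      let ϖ : ℝ := Real.arccos (-9 * Real.sqrt (C * D) / 4)
      let a : ℝ := -(4 * (A + B * Real.cos γ) / (3 * Real.sqrt (C * D))) *
        Real.cos (ϖ / 3 + 2 * (k : ℝ) * Real.pi / 3)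
      let b : ℝ := 4 * (J - B * Real.sin γ) / (3 * Real.sqrt (C * D)) *
        Real.cos (ϖ / 3 + 2 * (k : ℝ) * Real.pi / 3)
      (b / 2 - 3 * C / 8 * (a ^ 2 + b ^ 2) * b - J / 2 + B / 2 * Real.sin γ = 0) ∧
      (-a / 2 + 3 * C / 8 * (a ^ 2 + b ^ 2) * a - A / 2 - B / 2 * Real.cos γ = 0) :=
  equilibrium_points_formula_general A B C J γ hC hD0 hD
end

section
/- Let a, b : ℝ → ℝ be differentiable functions solving the system a'(t) = b(t)/2 − (3C/8)(a(t)² + b(t)²)b(t) − J/2 + (B/2)sin γ, b'(t) = −a(t)/2 + (3C/8)(a(t)² + b(t)²)a(t) − A/2 − (B/2)cos γ for all t. Then the function t ↦ h(a(t), b(t)), where h(a,b) = (a² + b²)/4 − (3C/32)(a² + b²)² + (b/2)(B sin γ − J) + (a/2)(A + B cos γ), is constant (its derivative is identically zero). -/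
/-!
The slow flow is the Hamiltonian system `a' = ∂h/∂b`, `b' = -∂h/∂a`, so by the chain rule
`(h ∘ (a, b))' = ∂h/∂a · ∂h/∂b - ∂h/∂b · ∂h/∂a = 0`.
-/

open Real

namespace SlowFlow

variable (A B C J γ : ℝ)

noncomputable def hamiltonian (x y : ℝ) : ℝ :=
  (x ^ 2 + y ^ 2) / 4 - 3 * C / 32 * (x ^ 2 + y ^ 2) ^ 2 +
    y / 2 * (B * sin γ - J) + x / 2 * (A + B * cos γ)

noncomputable def hamiltonianPartialA (x y : ℝ) : ℝ :=
  x / 2 - 3 * C / 8 * (x ^ 2 + y ^ 2) * x + (A + B * cos γ) / 2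

noncomputable def hamiltonianPartialB (x y : ℝ) : ℝ :=
  y / 2 - 3 * C / 8 * (x ^ 2 + y ^ 2) * y + (B * sin γ - J) / 2

theorem hasDerivAt_hamiltonian_comp {a b : ℝ → ℝ} {a' b' t : ℝ}
    (ha : HasDerivAt a a' t) (hb : HasDerivAt b b' t) :
    HasDerivAt (fun s => hamiltonian A B C J γ (a s) (b s))
      (hamiltonianPartialA A B C γ (a t) (b t) * a' +
        hamiltonianPartialB B C J γ (a t) (b t) * b') t := by
  have hr := (ha.pow 2).add (hb.pow 2)
  have h := (((hr.div_const 4).sub ((hr.pow 2).const_mul (3 * C / 32))).add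
    ((hb.div_const 2).mul_const (B * sin γ - J))).add
    ((ha.div_const 2).mul_const (A + B * cos γ))
  refine h.congr_deriv ?_
  simp only [hamiltonianPartialA, hamiltonianPartialB, Pi.add_apply, Pi.pow_apply]
  ring

theorem hasDerivAt_hamiltonian_comp_of_hamiltonian_flow {a b : ℝ → ℝ} {t : ℝ}
    (ha : HasDerivAt a (hamiltonianPartialB B C J γ (a t) (b t)) t)
    (hb : HasDerivAt b (-hamiltonianPartialA A B C γ (a t) (b t)) t) :
    HasDerivAt (fun s => hamiltonian A B C J γ (a s) (b s)) 0 t :=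
  (hasDerivAt_hamiltonian_comp A B C J γ ha hb).congr_deriv (by ring)

end SlowFlow

open SlowFlow

/-- Along any differentiable solution of the slow-flow system, the Hamiltonian
`h(a,b) = (a² + b²)/4 − (3C/32)(a² + b²)² + (b/2)(B sin γ − J) + (a/2)(A + B cos γ)`
is conserved: the derivative of `t ↦ h(a(t), b(t))` is identically zero. -/
theorem hamiltonian_conserved (A B C J γ : ℝ) (a b : ℝ → ℝ)
    (ha : ∀ t, HasDerivAt a
      (b t / 2 - 3 * C / 8 * (a t ^ 2 + b t ^ 2) * b t - J / 2 + B / 2 * Real.sin γ) t)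
    (hb : ∀ t, HasDerivAt b
      (-a t / 2 + 3 * C / 8 * (a t ^ 2 + b t ^ 2) * a t - A / 2 - B / 2 * Real.cos γ) t) :
    ∀ t, HasDerivAt (fun s =>
        (a s ^ 2 + b s ^ 2) / 4 - 3 * C / 32 * (a s ^ 2 + b s ^ 2) ^ 2 +
          b s / 2 * (B * Real.sin γ - J) + a s / 2 * (A + B * Real.cos γ)) 0 t := by
  intro t
  have ha_flow : HasDerivAt a (hamiltonianPartialB B C J γ (a t) (b t)) t :=
    (ha t).congr_deriv (by rw [hamiltonianPartialB]; ring)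
  have hb_flow : HasDerivAt b (-hamiltonianPartialA A B C γ (a t) (b t)) t :=
    (hb t).congr_deriv (by rw [hamiltonianPartialA]; ring)
  exact hasDerivAt_hamiltonian_comp_of_hamiltonian_flow A B C J γ ha_flow hb_flow
end

section
/- Let a, b : ℝ → ℝ solve the system a'(t) = b(t)/2 − (3C/8)(a(t)² + b(t)²)b(t) − J/2 + (B/2)sin γ, b'(t) = −a(t)/2 + (3C/8)(a(t)² + b(t)²)a(t) − A/2 − (B/2)cos γ, and set ρ(t) = (a(t)² + b(t)²)/2. Then for every t, (ρ'(t))² + ((1/2)((B sin γ − J) b(t) + a(t)(A + B cos γ)))² = (ρ(t)/2) · D, where D = (A + B cos γ)² + (J − B sin γ)². -/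
/-! The cubic terms of the slow flow are tangent to the circles `a² + b² = const`, so they drop out
of `ρ' = a a' + b b'`, leaving `ρ' = (u a − v b)/2` with `u = B sin γ − J` and `v = A + B cos γ`.
The claim is then the two-squares identity `(u a − v b)² + (u b + v a)² = (u² + v²)(a² + b²)`. -/

theorem HasDerivAt.half_sq_add_sq {f g : ℝ → ℝ} {f' g' t : ℝ} (hf : HasDerivAt f f' t)
    (hg : HasDerivAt g g' t) :
    HasDerivAt (fun s => (f s ^ 2 + g s ^ 2) / 2) (f t * f' + g t * g') t := by
  refine (((hf.pow 2).add (hg.pow 2)).div_const 2).congr_deriv ?_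
  ring

theorem hasDerivAt_action_of_slowFlow {A B C J γ t : ℝ} {a b : ℝ → ℝ}
    (ha : HasDerivAt a
      (b t / 2 - 3 * C / 8 * (a t ^ 2 + b t ^ 2) * b t - J / 2 + B / 2 * Real.sin γ) t)
    (hb : HasDerivAt b
      (-a t / 2 + 3 * C / 8 * (a t ^ 2 + b t ^ 2) * a t - A / 2 - B / 2 * Real.cos γ) t) :
    HasDerivAt (fun s => (a s ^ 2 + b s ^ 2) / 2)
      (((B * Real.sin γ - J) * a t - (A + B * Real.cos γ) * b t) / 2) t := by
  convert ha.half_sq_add_sq hb using 1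
  ring

/-- Along a solution of the slow-flow system, with `ρ = (a² + b²)/2`, one has
`(ρ')² + ((1/2)((B sin γ − J) b + a (A + B cos γ)))² = (ρ/2) · D`, where
`D = (A + B cos γ)² + (J − B sin γ)²`. -/
theorem action_derivative_sq (A B C J γ : ℝ) (a b : ℝ → ℝ)
    (ha : ∀ t, HasDerivAt a
      (b t / 2 - 3 * C / 8 * (a t ^ 2 + b t ^ 2) * b t - J / 2 + B / 2 * Real.sin γ) t)
    (hb : ∀ t, HasDerivAt b
      (-a t / 2 + 3 * C / 8 * (a t ^ 2 + b t ^ 2) * a t - A / 2 - B / 2 * Real.cos γ) t) :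
    ∀ t, (deriv (fun s => (a s ^ 2 + b s ^ 2) / 2) t) ^ 2 +
        (1 / 2 * ((B * Real.sin γ - J) * b t + a t * (A + B * Real.cos γ))) ^ 2 =
      (a t ^ 2 + b t ^ 2) / 2 / 2 *
        ((A + B * Real.cos γ) ^ 2 + (J - B * Real.sin γ) ^ 2) := by
  intro t
  rw [(hasDerivAt_action_of_slowFlow (ha t) (hb t)).deriv]
  linear_combination (-1 / 4 : ℝ) * sq_add_sq_mul_sq_add_sq (x₁ := B * Real.sin γ - J)
    (x₂ := A + B * Real.cos γ) (y₁ := a t) (y₂ := b t)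
end

section
/- Let a, b : ℝ → ℝ solve the system a'(t) = b(t)/2 − (3C/8)(a(t)² + b(t)²)b(t) − J/2 + (B/2)sin γ, b'(t) = −a(t)/2 + (3C/8)(a(t)² + b(t)²)a(t) − A/2 − (B/2)cos γ, let ρ(t) = (a(t)² + b(t)²)/2, and let h be the (constant) value of the Hamiltonian h(a,b) = (a² + b²)/4 − (3C/32)(a² + b²)² + (b/2)(B sin γ − J) + (a/2)(A + B cos γ) along this solution. Then for every t, (ρ'(t))² = (√(ρ(t)D/2) − (h − ρ(t)/2 + (3C/8)ρ(t)²)) · (√(ρ(t)D/2) + (h − ρ(t)/2 + (3C/8)ρ(t)²)), where D = (A + B cos γ)² + (J − B sin γ)². -/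
/-!
Write `P = A + B cos γ` and `Q = J − B sin γ`. Along the flow the cubic terms cancel in
`ρ' = a a' + b b' = −(aQ + bP)/2`, and the quartic terms cancel in
`h − ρ/2 + (3C/8)ρ² = (aP − bQ)/2`. The Brahmagupta–Fibonacci identity
`(a² + b²)(P² + Q²) = (aP − bQ)² + (aQ + bP)²` then reads
`ρ'² = ρD/2 − (h − ρ/2 + (3C/8)ρ²)²`, a difference of two squares.
-/

theorem hasDerivAt_half_sq_add_sq {a b : ℝ → ℝ} {a' b' t : ℝ} (ha : HasDerivAt a a' t)
    (hb : HasDerivAt b b' t) :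
    HasDerivAt (fun s => (a s ^ 2 + b s ^ 2) / 2) (a t * a' + b t * b') t :=
  (((ha.pow 2).add (hb.pow 2)).div_const 2).congr_deriv (by ring)

/-- Along a solution of the slow-flow system, with `ρ = (a² + b²)/2` and `h` the
constant value of the Hamiltonian, one has
`(ρ')² = (√(ρD/2) − (h − ρ/2 + (3C/8)ρ²))·(√(ρD/2) + (h − ρ/2 + (3C/8)ρ²))`,
where `D = (A + B cos γ)² + (J − B sin γ)²`. -/
theorem action_derivative_factored (A B C J γ h : ℝ) (a b : ℝ → ℝ)
    (ha : ∀ t, HasDerivAt a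
      (b t / 2 - 3 * C / 8 * (a t ^ 2 + b t ^ 2) * b t - J / 2 + B / 2 * Real.sin γ) t)
    (hb : ∀ t, HasDerivAt b
      (-a t / 2 + 3 * C / 8 * (a t ^ 2 + b t ^ 2) * a t - A / 2 - B / 2 * Real.cos γ) t)
    (hh : ∀ t, (a t ^ 2 + b t ^ 2) / 4 - 3 * C / 32 * (a t ^ 2 + b t ^ 2) ^ 2 +
      b t / 2 * (B * Real.sin γ - J) + a t / 2 * (A + B * Real.cos γ) = h) :
    ∀ t,
      let ρ := (a t ^ 2 + b t ^ 2) / 2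
      let D := (A + B * Real.cos γ) ^ 2 + (J - B * Real.sin γ) ^ 2
      (deriv (fun s => (a s ^ 2 + b s ^ 2) / 2) t) ^ 2 =
        (Real.sqrt (ρ * D / 2) - (h - ρ / 2 + 3 * C / 8 * ρ ^ 2)) *
          (Real.sqrt (ρ * D / 2) + (h - ρ / 2 + 3 * C / 8 * ρ ^ 2)) := by
  intro t ρ D
  set P := A + B * Real.cos γ
  set Q := J - B * Real.sin γ
  have hρ' : deriv (fun s => (a s ^ 2 + b s ^ 2) / 2) t = -(a t * Q + b t * P) / 2 := by
    rw [(hasDerivAt_half_sq_add_sq (ha t) (hb t)).deriv]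
    ring
  have hE : h - ρ / 2 + 3 * C / 8 * ρ ^ 2 = (a t * P - b t * Q) / 2 := by
    rw [← hh t]
    ring
  have hsqrt : √(ρ * D / 2) * √(ρ * D / 2) = ρ * D / 2 := Real.mul_self_sqrt (by positivity)
  rw [hρ', hE]
  linear_combination
    -hsqrt - (sq_add_sq_mul_sq_add_sq (x₁ := a t) (x₂ := b t) (y₁ := P) (y₂ := Q)) / 4
end

section
/- Let C > 0, D > 0, ρ* > 0 be real numbers with −4 + 3C(2√(2Dρ*) + ρ*(4 − 3Cρ*)) > 0, and set Q(t) = t·√(−4 + 3C(2√(2Dρ*) + ρ*(4 − 3Cρ*))). Define ρ(t) = [ (128 e^{Q(t)/2} + 27C³√(2Dρ*))ρ* − 16 e^{Q(t)/4}(3C(6ρ* − 3C(ρ*)² + 4√(2Dρ*)) − 8) ] / [ 128 e^{Q(t)/2} + 27C³√(2Dρ*) − 48 e^{Q(t)/4}(3Cρ* − 2) ]. Then ρ(t) → ρ* as t → +∞ and ρ(t) → ρ* as t → −∞. -/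
/-!
In the variable `x = exp (Q t / 4)` the solution is a ratio of two quadratics,
`ρ = ((128 x² + K) ρ* - 16 A x) / (128 x² - 48 B x + K)` for constants `A`, `B` and `K = 27 C³ √(2 D ρ*) > 0`.
As `t → +∞` we have `x → ∞` and the ratio of leading coefficients is `128 ρ* / 128`;
as `t → -∞` we have `x → 0` and the ratio of constant terms is `K ρ* / K`.
-/

open Filter Topology

noncomputable def quadRatio (a b c d e f x : ℝ) : ℝ :=
  (a * x ^ 2 + b * x + c) / (d * x ^ 2 + e * x + f)

lemma tendsto_quadRatio_nhds_zero (a b c d e : ℝ) {f : ℝ} (hf : f ≠ 0) :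
    Tendsto (quadRatio a b c d e f) (𝓝 0) (𝓝 (c / f)) := by
  have hcont : ContinuousAt (quadRatio a b c d e f) 0 :=
    ContinuousAt.div (by fun_prop) (by fun_prop) (by simpa using hf)
  simpa [quadRatio] using hcont.tendsto

lemma quadRatio_inv (a b c d e f : ℝ) {x : ℝ} (hx : x ≠ 0) :
    quadRatio c b a f e d x⁻¹ = quadRatio a b c d e f x := by
  unfold quadRatio
  rw [← mul_div_mul_right _ _ (pow_ne_zero 2 hx)]
  congr 1 <;> field_simp <;> ring

lemma tendsto_quadRatio_atTop (a b c e f : ℝ) {d : ℝ} (hd : d ≠ 0) :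
    Tendsto (quadRatio a b c d e f) atTop (𝓝 (a / d)) := by
  have h := (tendsto_quadRatio_nhds_zero c b a f e hd).comp tendsto_inv_atTop_zero
  refine h.congr' ?_
  filter_upwards [eventually_gt_atTop 0] with x hx
  exact quadRatio_inv a b c d e f hx.ne'

/-- The explicit homoclinic solution `ρ(t)` tends to the saddle action value `ρ*`
as `t → +∞` and as `t → −∞`. -/
theorem homoclinic_solution_limits (C D ρs : ℝ) (hC : 0 < C) (hD : 0 < D)
    (hρs : 0 < ρs)
    (hQ : 0 < -4 + 3 * C * (2 * Real.sqrt (2 * D * ρs) + ρs * (4 - 3 * C * ρs))) :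
    let Q : ℝ → ℝ := fun t =>
      t * Real.sqrt (-4 + 3 * C * (2 * Real.sqrt (2 * D * ρs) + ρs * (4 - 3 * C * ρs)))
    let ρ : ℝ → ℝ := fun t =>
      ((128 * Real.exp (Q t / 2) + 27 * C ^ 3 * Real.sqrt (2 * D * ρs)) * ρs -
          16 * Real.exp (Q t / 4) *
            (3 * C * (6 * ρs - 3 * C * ρs ^ 2 + 4 * Real.sqrt (2 * D * ρs)) - 8)) /
        (128 * Real.exp (Q t / 2) + 27 * C ^ 3 * Real.sqrt (2 * D * ρs) -
          48 * Real.exp (Q t / 4) * (3 * C * ρs - 2))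
    Filter.Tendsto ρ Filter.atTop (nhds ρs) ∧
      Filter.Tendsto ρ Filter.atBot (nhds ρs) := by
  intro Q ρ
  set s := Real.sqrt (-4 + 3 * C * (2 * Real.sqrt (2 * D * ρs) + ρs * (4 - 3 * C * ρs)))
  set K := 27 * C ^ 3 * Real.sqrt (2 * D * ρs)
  set A := 3 * C * (6 * ρs - 3 * C * ρs ^ 2 + 4 * Real.sqrt (2 * D * ρs)) - 8
  set B := 3 * C * ρs - 2
  have hs : 0 < s / 4 := by positivity
  have hK : K ≠ 0 := by positivity
  have hρ : ρ = quadRatio (128 * ρs) (-16 * A) (K * ρs) 128 (-48 * B) K ∘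
      fun t => Real.exp (t * (s / 4)) := by
    funext t
    have hquarter : Q t / 4 = t * (s / 4) := by ring
    have hsq : Real.exp (Q t / 2) = Real.exp (t * (s / 4)) ^ 2 := by
      rw [sq, ← Real.exp_add]; congr 1; ring
    simp only [ρ, Function.comp_apply, quadRatio, hsq, hquarter]
    congr 1 <;> ring
  rw [hρ]
  constructor
  · have hlim := (tendsto_quadRatio_atTop (128 * ρs) (-16 * A) (K * ρs) (-48 * B) K
      (by norm_num : (128 : ℝ) ≠ 0)).comp
      (Real.tendsto_exp_atTop.comp (tendsto_id.atTop_mul_const hs))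
    rwa [mul_div_cancel_left₀ ρs (by norm_num : (128 : ℝ) ≠ 0)] at hlim
  · have hlim := (tendsto_quadRatio_nhds_zero (128 * ρs) (-16 * A) (K * ρs) 128 (-48 * B) hK).comp
      (Real.tendsto_exp_atBot.comp (tendsto_id.atBot_mul_const hs))
    rwa [mul_div_cancel_left₀ ρs hK] at hlim
end
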